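/- arXiv:2109.13394 — 2 statements merged into one kernel-verified Lean document; each statement's English description precedes it below -/
import Mathlib

section
/- Let G be a connected planar embedded multigraph with no self-loops in G or its dual G*, and suppose there is a face f₀ such that every other face has degree at most k₂. Then every edge of G is incident to at least one face of degree at most k₂, and hence (by the cycle bound on effective resistance) has effective resistance at most 1 − 1/k₂. -/
/-!
As the dual has no loops, every edge bounds two distinct faces, one of which is not `f₀` and so
has degree `k ≤ k₂`; its boundary is a circuit of length `k` through the edge. Sending `1 - 1/k`
units of current through the edge and `1/k` around the rest of the circuit is a unit flow of
energy `(1 - 1/k)^2 + (k - 1)/k^2 = 1 - 1/k`, and by Thomson's principle the potential drop of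
the electrical flow is at most the energy of any unit flow.
-/

/-- Net current out of vertex `c` for a current assignment `i` on oriented edges. -/
def netFlow {V E : Type} [Fintype E] [DecidableEq V] (s t : E → V) (i : E → ℝ) (c : V) : ℝ :=
  (∑ e : E, if s e = c then i e else 0) - (∑ e : E, if t e = c then i e else 0)

/-- `(v, i)` is the electrical flow of one unit of current from `a` to `b` in the
multigraph `(s, t)` with unit resistance on every edge; the effective resistance
`R_{ab}` is then `v a − v b`. -/
def IsUnitFlow {V E : Type} [Fintype E] [DecidableEq V] (s t : E → V) (a b : V)
    (v : V → ℝ) (i : E → ℝ) : Prop :=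
  (∀ c : V, netFlow s t i c = (if c = a then 1 else 0) - (if c = b then 1 else 0)) ∧
  (∀ e : E, v (s e) - v (t e) = i e)

/-- Adjacency in a multigraph. -/
def MAdj {V E : Type} (s t : E → V) (x y : V) : Prop :=
  ∃ e : E, (s e = x ∧ t e = y) ∨ (s e = y ∧ t e = x)

/-- Connectivity of a multigraph. -/
def MConnected {V E : Type} (s t : E → V) : Prop :=
  Nonempty V ∧ ∀ x y : V, Relation.ReflTransGen (MAdj s t) x y

/-- The degree of a face `f`: the number of edges on its boundary.  Here a planar
embedding of the multigraph `(s, t)` is recorded combinatorially by a face type `F` and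
maps `fl fr : E → F` giving the two faces bounded by each edge. -/
noncomputable def faceDeg {E F : Type} [Fintype E] (fl fr : E → F) (f : F) : ℕ :=
  Nat.card {e : E // fl e = f ∨ fr e = f}

/-- The boundary of the face `f` is a simple cycle: there are `faceDeg fl fr f` distinct
vertices and distinct edges, the edges being exactly those bounding `f`, joining
consecutive vertices around the cycle. -/
def FaceBoundaryIsCycle {V E F : Type} [Fintype E] (s t : E → V) (fl fr : E → F)
    (f : F) : Prop :=
  ∃ (k : ℕ) (hk : 2 ≤ k) (x : Fin k → V) (e' : Fin k → E),
    k = faceDeg fl fr f ∧ Function.Injective x ∧ Function.Injective e' ∧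
    (∀ j : Fin k, fl (e' j) = f ∨ fr (e' j) = f) ∧
    (∀ e : E, (fl e = f ∨ fr e = f) → ∃ j : Fin k, e' j = e) ∧
    (∀ j : Fin k, (s (e' j) = x j ∧ t (e' j) = x (j + ⟨1, by omega⟩)) ∨
      (s (e' j) = x (j + ⟨1, by omega⟩) ∧ t (e' j) = x j))

def IsUnitNetFlow {V E : Type} [Fintype E] [DecidableEq V] (s t : E → V) (a b : V)
    (j : E → ℝ) : Prop :=
  ∀ c : V, netFlow s t j c = (if c = a then 1 else 0) - (if c = b then 1 else 0)

section NetFlow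

variable {V E : Type} [Fintype E] [DecidableEq V] (s t : E → V)

lemma netFlow_eq_sum (j : E → ℝ) (c : V) :
    netFlow s t j c = ∑ e, j e * ((if s e = c then 1 else 0) - (if t e = c then 1 else 0)) := by
  simp only [netFlow, mul_sub, mul_ite, mul_one, mul_zero, Finset.sum_sub_distrib]

lemma netFlow_sub (i j : E → ℝ) (c : V) :
    netFlow s t (i - j) c = netFlow s t i c - netFlow s t j c := by
  simp only [netFlow_eq_sum, Pi.sub_apply, sub_mul, Finset.sum_sub_distrib]

lemma netFlow_smul (r : ℝ) (j : E → ℝ) (c : V) :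
    netFlow s t (r • j) c = r * netFlow s t j c := by
  simp only [netFlow_eq_sum, Pi.smul_apply, smul_eq_mul, mul_assoc, Finset.mul_sum]

lemma netFlow_sum {ι : Type*} (I : Finset ι) (j : ι → E → ℝ) (c : V) :
    netFlow s t (∑ m ∈ I, j m) c = ∑ m ∈ I, netFlow s t (j m) c := by
  simp only [netFlow_eq_sum, Finset.sum_apply, Finset.sum_mul]
  exact Finset.sum_comm

lemma isUnitNetFlow_single [DecidableEq E] (e : E) :
    IsUnitNetFlow s t (s e) (t e) (Pi.single e 1) := by
  intro c
  simp [netFlow_eq_sum, Pi.single_apply, eq_comm]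

lemma sum_netFlow_mul [Fintype V] (j : E → ℝ) (v : V → ℝ) :
    ∑ c, netFlow s t j c * v c = ∑ e, j e * (v (s e) - v (t e)) := by
  simp only [netFlow_eq_sum, Finset.sum_mul, mul_assoc]
  rw [Finset.sum_comm]
  refine Finset.sum_congr rfl fun e _ => ?_
  simp [← Finset.mul_sum, sub_mul, Finset.sum_sub_distrib]

variable {s t} [Fintype V] {a b : V} {v : V → ℝ} {i j : E → ℝ}

lemma IsUnitFlow.sum_mul_eq (hi : IsUnitFlow s t a b v i) (hj : IsUnitNetFlow s t a b j) :
    ∑ e, j e * i e = v a - v b := by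
  calc ∑ e, j e * i e = ∑ e, j e * (v (s e) - v (t e)) := by simp only [hi.2]
    _ = ∑ c, netFlow s t j c * v c := (sum_netFlow_mul s t j v).symm
    _ = v a - v b := by simp [hj _, sub_mul, Finset.sum_sub_distrib]

theorem IsUnitFlow.sub_le_energy (hi : IsUnitFlow s t a b v i) (hj : IsUnitNetFlow s t a b j) :
    v a - v b ≤ ∑ e, j e ^ 2 := by
  have hii := hi.sum_mul_eq hi.1
  have hji := hi.sum_mul_eq hj
  have : 0 ≤ ∑ e, (j e - i e) ^ 2 := Finset.sum_nonneg fun e _ => sq_nonneg _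
  have hexp : ∑ e, (j e - i e) ^ 2 = ∑ e, j e ^ 2 - 2 * ∑ e, j e * i e + ∑ e, i e * i e := by
    rw [Finset.mul_sum, ← Finset.sum_sub_distrib, ← Finset.sum_add_distrib]
    exact Finset.sum_congr rfl fun e _ => by ring
  linarith

end NetFlow

section ClosedWalk

variable {V E : Type} [DecidableEq V] (s t : E → V) {k : ℕ} (x : Fin k → V) (w : Fin k → E)

def IsClosedWalk [NeZero k] : Prop :=
  ∀ m : Fin k, (s (w m) = x m ∧ t (w m) = x (m + 1)) ∨ (s (w m) = x (m + 1) ∧ t (w m) = x m)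

def walkSign (m : Fin k) : ℝ := if s (w m) = x m then 1 else -1

def walkCirculation [DecidableEq E] : E → ℝ := ∑ m, walkSign s x w m • Pi.single (w m) 1

lemma walkSign_mul_self (m : Fin k) : walkSign s x w m * walkSign s x w m = 1 := by
  unfold walkSign; split_ifs <;> norm_num

variable {s t x w}

lemma IsClosedWalk.walkSign_mul_incidence [NeZero k] (h : IsClosedWalk s t x w) (m : Fin k)
    (c : V) :
    walkSign s x w m * ((if c = s (w m) then 1 else 0) - (if c = t (w m) then 1 else 0)) =
      (if c = x m then 1 else 0) - (if c = x (m + 1) then 1 else 0) := by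
  unfold walkSign
  rcases h m with ⟨hs, ht⟩ | ⟨hs, ht⟩ <;> rw [hs, ht] <;> split_ifs <;> simp_all

lemma IsClosedWalk.netFlow_walkCirculation [Fintype E] [DecidableEq E] [NeZero k]
    (h : IsClosedWalk s t x w) (c : V) : netFlow s t (walkCirculation s x w) c = 0 := by
  simp only [walkCirculation, netFlow_sum, netFlow_smul, isUnitNetFlow_single s t _ c,
    h.walkSign_mul_incidence, Finset.sum_sub_distrib]
  exact sub_eq_zero.2
    (Equiv.sum_comp (Equiv.addRight 1) fun m => if c = x m then (1 : ℝ) else 0).symm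

lemma walkCirculation_apply [DecidableEq E] (hw : Function.Injective w) (m : Fin k) :
    walkCirculation s x w (w m) = walkSign s x w m := by
  simp [walkCirculation, Pi.single_apply, hw.eq_iff]

lemma walkCirculation_dotProduct_self [Fintype E] [DecidableEq E] (hw : Function.Injective w) :
    walkCirculation s x w ⬝ᵥ walkCirculation s x w = k := by
  conv_lhs => enter [2]; rw [walkCirculation]
  simp [dotProduct_sum, dotProduct_smul, dotProduct_single, walkCirculation_apply hw,
    walkSign_mul_self]

variable (s x w) in
noncomputable def circuitFlow [DecidableEq E] (m₀ : Fin k) : E → ℝ :=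
  Pi.single (w m₀) 1 - (walkSign s x w m₀ / k) • walkCirculation s x w

lemma IsClosedWalk.isUnitNetFlow_circuitFlow [Fintype E] [DecidableEq E] [NeZero k]
    (h : IsClosedWalk s t x w) (m₀ : Fin k) :
    IsUnitNetFlow s t (s (w m₀)) (t (w m₀)) (circuitFlow s x w m₀) := by
  intro c
  rw [circuitFlow, netFlow_sub, netFlow_smul, h.netFlow_walkCirculation, mul_zero, sub_zero]
  exact isUnitNetFlow_single s t _ c

lemma sum_circuitFlow_sq [Fintype E] [DecidableEq E] [NeZero k] (hw : Function.Injective w)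
    (m₀ : Fin k) : ∑ e, circuitFlow s x w m₀ e ^ 2 = 1 - 1 / k := by
  have hk : (k : ℝ) ≠ 0 := NeZero.ne _
  have hsign := walkSign_mul_self s x w m₀
  simp only [sq]
  change circuitFlow s x w m₀ ⬝ᵥ circuitFlow s x w m₀ = _
  simp only [circuitFlow, sub_dotProduct, dotProduct_sub, smul_dotProduct,
    dotProduct_smul, single_dotProduct, dotProduct_single, walkCirculation_dotProduct_self hw,
    walkCirculation_apply hw, Pi.sub_apply, Pi.smul_apply, Pi.single_eq_same, smul_eq_mul]
  field_simp
  linear_combination -hsign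

theorem IsClosedWalk.resistance_le [Fintype V] [Fintype E] [DecidableEq E] [NeZero k]
    (h : IsClosedWalk s t x w) (hw : Function.Injective w) (m₀ : Fin k) {v : V → ℝ} {i : E → ℝ}
    (hi : IsUnitFlow s t (s (w m₀)) (t (w m₀)) v i) :
    v (s (w m₀)) - v (t (w m₀)) ≤ 1 - 1 / k :=
  sum_circuitFlow_sq (s := s) (x := x) hw m₀ ▸ hi.sub_le_energy (h.isUnitNetFlow_circuitFlow m₀)

end ClosedWalk

lemma exists_incident_face_ne {E F : Type} {fl fr : E → F} {e : E} (h : fl e ≠ fr e) (f₀ : F) :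
    ∃ f, (fl e = f ∨ fr e = f) ∧ f ≠ f₀ := by
  by_cases h₀ : fl e = f₀
  · exact ⟨fr e, Or.inr rfl, fun h' => h (h₀.trans h'.symm)⟩
  · exact ⟨fl e, Or.inl rfl, h₀⟩

theorem FaceBoundaryIsCycle.resistance_le {V E F : Type} [Fintype V] [Fintype E] [DecidableEq V]
    {s t : E → V} {fl fr : E → F} {f : F} (hf : FaceBoundaryIsCycle s t fl fr f) {e : E}
    (he : fl e = f ∨ fr e = f) {k₂ : ℕ} (hk₂ : faceDeg fl fr f ≤ k₂) {v : V → ℝ} {i : E → ℝ}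
    (hi : IsUnitFlow s t (s e) (t e) v i) :
    v (s e) - v (t e) ≤ 1 - 1 / (k₂ : ℝ) := by
  classical
  obtain ⟨k, hk, x, w, hdeg, -, hw, -, hcover, hwalk⟩ := hf
  rw [← hdeg] at hk₂
  obtain ⟨m₀, rfl⟩ := hcover e he
  have : NeZero k := ⟨by omega⟩
  have hclosed : IsClosedWalk s t x w := by
    simpa only [IsClosedWalk, ← Fin.one_eq_mk_of_lt] using hwalk
  have hk₀ : (0 : ℝ) < k := by exact_mod_cast NeZero.pos k
  calc _ ≤ 1 - 1 / (k : ℝ) := hclosed.resistance_le hw m₀ hi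
    _ ≤ 1 - 1 / (k₂ : ℝ) := by gcongr

theorem stmt8_general {V E F : Type} [Fintype V] [Fintype E] [DecidableEq V]
    (s t : E → V)
    (fl fr : E → F) (hdual : ∀ e : E, fl e ≠ fr e)
    (hfaces : ∀ f : F, FaceBoundaryIsCycle s t fl fr f)
    (f₀ : F) (k₂ : ℕ) (hk₂ : ∀ f : F, f ≠ f₀ → faceDeg fl fr f ≤ k₂) :
    ∀ e : E, (∃ f : F, (fl e = f ∨ fr e = f) ∧ faceDeg fl fr f ≤ k₂) ∧
      ∀ (v : V → ℝ) (i : E → ℝ), IsUnitFlow s t (s e) (t e) v i →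
        v (s e) - v (t e) ≤ 1 - 1 / (k₂ : ℝ) := by
  intro e
  obtain ⟨f, hef, hf₀⟩ := exists_incident_face_ne (hdual e) f₀
  exact ⟨⟨f, hef, hk₂ f hf₀⟩, fun v i hi => (hfaces f).resistance_le hef (hk₂ f hf₀) hi⟩

/-- let `(s, t)` be a connected planar embedded multigraph (faces `F`, each
edge `e` bounding the two faces `fl e`, `fr e`) with no self-loops in the graph
(`s e ≠ t e`) or its dual (`fl e ≠ fr e`), and suppose there is a face `f₀` such that
every other face has degree at most `k₂`. Then every edge is incident to at least one
face of degree at most `k₂`, and hence has effective resistance at most `1 − 1/k₂`. -/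
theorem stmt8 {V E F : Type} [Fintype V] [Fintype E] [Fintype F] [DecidableEq V]
    (s t : E → V) (hconn : MConnected s t) (hloop : ∀ e : E, s e ≠ t e)
    (fl fr : E → F) (hdual : ∀ e : E, fl e ≠ fr e)
    (hfaces : ∀ f : F, FaceBoundaryIsCycle s t fl fr f)
    (f₀ : F) (k₂ : ℕ) (hk₂ : ∀ f : F, f ≠ f₀ → faceDeg fl fr f ≤ k₂) :
    ∀ e : E, (∃ f : F, (fl e = f ∨ fr e = f) ∧ faceDeg fl fr f ≤ k₂) ∧
      ∀ (v : V → ℝ) (i : E → ℝ), IsUnitFlow s t (s e) (t e) v i →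
        v (s e) - v (t e) ≤ 1 - 1 / (k₂ : ℝ) :=
  stmt8_general s t fl fr hdual hfaces f₀ k₂ hk₂
end

section
/- Let G be a finite connected multigraph, e an edge of G between a and b, and suppose edge resistances are increased from r to r′ ≥ r (entrywise, on all edges). Then the effective resistance between a and b weakly increases: R_{ab}(r) ≤ R_{ab}(r′). -/
/-- `(v, i)` is the electrical flow of one unit of current from `a` to `b` in the
multigraph `(s, t)` with resistance `r e` on each edge `e`: Kirchhoff's current law plus
Ohm's law `v(s e) − v(t e) = i e * r e`. The effective resistance `R_{ab}(r)` is then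
`v a − v b`. -/
def IsFlow {V E : Type} [Fintype E] [DecidableEq V] (s t : E → V) (r : E → ℝ) (a b : V)
    (v : V → ℝ) (i : E → ℝ) : Prop :=
  (∀ c : V, netFlow s t i c = (if c = a then 1 else 0) - (if c = b then 1 else 0)) ∧
  (∀ e : E, v (s e) - v (t e) = i e * r e)

lemma sum_key {V E : Type} [Fintype V] [Fintype E] [DecidableEq V] (s t : E → V)
    (j : E → ℝ) (w : V → ℝ) :
    ∑ e : E, j e * (w (s e) - w (t e)) = ∑ c : V, w c * netFlow s t j c := by
  have h1 : ∀ u : E → V, ∑ c : V, w c * (∑ e : E, if u e = c then j e else 0)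
      = ∑ e : E, w (u e) * j e := by
    intro u
    calc ∑ c : V, w c * (∑ e : E, if u e = c then j e else 0)
        = ∑ c : V, ∑ e : E, (if u e = c then w c * j e else 0) := by
          refine Finset.sum_congr rfl fun c _ => ?_
          rw [Finset.mul_sum]
          exact Finset.sum_congr rfl fun e _ => by split <;> simp
      _ = ∑ e : E, ∑ c : V, (if u e = c then w c * j e else 0) := Finset.sum_comm
      _ = ∑ e : E, w (u e) * j e := Finset.sum_congr rfl fun e _ => by simp
  unfold netFlow
  simp only [mul_sub, Finset.sum_sub_distrib, h1]
  congr 1 <;> exact Finset.sum_congr rfl fun e _ => by ring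

lemma flow_energy {V E : Type} [Fintype V] [Fintype E] [DecidableEq V] (s t : E → V)
    (r : E → ℝ) (a b : V) (v : V → ℝ) (i : E → ℝ) (hflow : IsFlow s t r a b v i)
    (j : E → ℝ) (hj : ∀ c : V, netFlow s t j c = (if c = a then 1 else 0) - (if c = b then 1 else 0)) :
    ∑ e : E, j e * (i e * r e) = v a - v b := by
  have := sum_key s t j v
  simp only [hflow.2] at this
  rw [this]
  simp only [hj, mul_sub, Finset.sum_sub_distrib, mul_ite, mul_one, mul_zero]
  simp

/-- Rayleigh's Monotonicity Principle: increasing the (positive) edge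
resistances entrywise from `r` to `r'` weakly increases the effective resistance between
any two vertices `a` and `b` of a finite connected multigraph. -/
theorem stmt16 {V E : Type} [Fintype V] [Fintype E] [DecidableEq V] (s t : E → V)
    (hconn : MConnected s t) (r r' : E → ℝ)
    (hr : ∀ e : E, 0 < r e) (hle : ∀ e : E, r e ≤ r' e)
    (a b : V) (v : V → ℝ) (i : E → ℝ) (v' : V → ℝ) (i' : E → ℝ)
    (hflow : IsFlow s t r a b v i) (hflow' : IsFlow s t r' a b v' i') :
    v a - v b ≤ v' a - v' b := by
  classical
  set A := ∑ e : E, i e ^ 2 * r e with hA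
  set B := ∑ e : E, i' e ^ 2 * r e with hB
  set B' := ∑ e : E, i' e ^ 2 * r' e with hB'
  have hAeq : v a - v b = A := by
    rw [← flow_energy s t r a b v i hflow i hflow.1]
    exact Finset.sum_congr rfl fun e _ => by ring
  have hBeq : v' a - v' b = B' := by
    rw [← flow_energy s t r' a b v' i' hflow' i' hflow'.1]
    exact Finset.sum_congr rfl fun e _ => by ring
  have hcross' : ∑ e : E, i' e * (i e * r e) = v a - v b :=
    flow_energy s t r a b v i hflow i' hflow'.1
  have hBB' : B ≤ B' := Finset.sum_le_sum fun e _ =>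
    mul_le_mul_of_nonneg_left (hle e) (sq_nonneg _)
  have hAnn : 0 ≤ A := Finset.sum_nonneg fun e _ =>
    mul_nonneg (sq_nonneg _) (hr e).le
  have hBnn : 0 ≤ B := Finset.sum_nonneg fun e _ =>
    mul_nonneg (sq_nonneg _) (hr e).le
  -- Cauchy-Schwarz: (∑ i i' r)^2 ≤ A * B
  have hcs : (∑ e : E, i' e * (i e * r e)) ^ 2 ≤ B * A := by
    have := Finset.sum_mul_sq_le_sq_mul_sq Finset.univ
      (fun e => i' e * Real.sqrt (r e)) (fun e => i e * Real.sqrt (r e))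
    calc (∑ e : E, i' e * (i e * r e)) ^ 2
        = (∑ e : E, (i' e * Real.sqrt (r e)) * (i e * Real.sqrt (r e))) ^ 2 := by
          congr 1
          refine Finset.sum_congr rfl fun e _ => ?_
          have : Real.sqrt (r e) * Real.sqrt (r e) = r e :=
            Real.mul_self_sqrt (hr e).le
          linear_combination (-(i' e * i e)) * this
      _ ≤ (∑ e : E, (i' e * Real.sqrt (r e)) ^ 2) * ∑ e : E, (i e * Real.sqrt (r e)) ^ 2 := this
      _ = B * A := by
          congr 1 <;> refine Finset.sum_congr rfl fun e _ => ?_ <;>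
            rw [mul_pow, Real.sq_sqrt (hr e).le]
  rw [hAeq, hBeq]
  rcases eq_or_lt_of_le hAnn with h0 | h0
  · linarith
  · have hAB : A ≤ B := by
      rw [hcross', hAeq] at hcs
      nlinarith
    linarith
end
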